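/- arXiv:2204.06638 — 4 statements merged into one kernel-verified Lean document; each statement's English description precedes it below -/
import Mathlib

section
/- For n : ℕ and a b c d : Fin n → ZMod 2, one has W(a,b) * W(c,d) = (-1)^((∑ j, b j * c j : ZMod 2).val) • W(a+c, b+d). Consequently, W(a,b) and W(c,d) commute if and only if (∑ j, a j * d j) + (∑ j, b j * c j) = 0 in ZMod 2, i.e. if and only if the symplectic inner product of (a,b) and (c,d) over 𝔽₂ vanishes. -/
open Matrix

/-- The unsigned `n`-qubit Pauli-type matrix `W(a,b)`. -/
noncomputable def W (n : ℕ) (a b : Fin n → ZMod 2) :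
    Matrix (Fin n → ZMod 2) (Fin n → ZMod 2) ℂ :=
  fun x y => if x = y + a then (-1 : ℂ) ^ (∑ j, b j * y j : ZMod 2).val else 0

lemma pow_val_add (u v : ZMod 2) :
    ((-1 : ℂ)) ^ (u + v).val = (-1) ^ u.val * (-1) ^ v.val := by
  rw [ZMod.val_add, ← neg_one_pow_eq_pow_mod_two, pow_add]

lemma pow_val_inj (u v : ZMod 2) :
    ((-1 : ℂ)) ^ u.val = (-1) ^ v.val ↔ u = v := by
  rw [← (ZMod.val_injective 2).eq_iff]
  have hu := ZMod.val_lt u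
  have hv := ZMod.val_lt v
  generalize u.val = p at *
  generalize v.val = q at *
  interval_cases p <;> interval_cases q <;> norm_num

lemma Wmul (n : ℕ) (a b c d : Fin n → ZMod 2) :
    W n a b * W n c d = (-1 : ℂ) ^ (∑ j, b j * c j : ZMod 2).val • W n (a + c) (b + d) := by
  ext x z
  simp only [Matrix.mul_apply, W, Matrix.smul_apply, smul_eq_mul]
  have key : ∀ y : Fin n → ZMod 2,
      (if x = y + a then (-1 : ℂ) ^ (∑ j, b j * y j : ZMod 2).val else 0) *
        (if y = z + c then (-1 : ℂ) ^ (∑ j, d j * z j : ZMod 2).val else 0) =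
      if y = z + c then
        (if x = y + a then
          (-1 : ℂ) ^ (∑ j, b j * y j : ZMod 2).val *
            (-1 : ℂ) ^ (∑ j, d j * z j : ZMod 2).val else 0) else 0 := by
    intro y; split_ifs <;> ring
  rw [Finset.sum_congr rfl fun y _ => key y, Finset.sum_ite_eq' Finset.univ (z + c)]
  simp only [Finset.mem_univ, if_true]
  have hcond : (z + c + a = x) ↔ (z + (a + c) = x) := by
    constructor <;> intro h <;> rw [← h] <;> abel
  have e1 : (∑ j, b j * (z + c) j) = (∑ j, b j * z j) + ∑ j, b j * c j := by
    simp [Pi.add_apply, mul_add, Finset.sum_add_distrib]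
  have e2 : (∑ j, (b + d) j * z j) = (∑ j, b j * z j) + ∑ j, d j * z j := by
    simp [Pi.add_apply, add_mul, Finset.sum_add_distrib]
  by_cases h : x = z + c + a
  · have h' : x = z + (a + c) := by rw [h]; abel
    rw [if_pos h, if_pos h', e1, e2, pow_val_add, pow_val_add]
    ring
  · have h' : ¬ x = z + (a + c) := by
      intro hh; exact h (by rw [hh]; abel)
    rw [if_neg h, if_neg h', mul_zero]

theorem stmt_3 (n : ℕ) (a b c d : Fin n → ZMod 2) :
    W n a b * W n c d = (-1 : ℂ) ^ (∑ j, b j * c j : ZMod 2).val • W n (a + c) (b + d) ∧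
    (W n a b * W n c d = W n c d * W n a b ↔
      (∑ j, a j * d j) + (∑ j, b j * c j) = (0 : ZMod 2)) := by
  refine ⟨Wmul n a b c d, ?_⟩
  have h1 := Wmul n a b c d
  have h2 := Wmul n c d a b
  rw [add_comm c a, add_comm d b] at h2
  rw [h1, h2]
  have hent : W n (a + c) (b + d) (0 + (a + c)) 0 = 1 := by
    simp [W]
  constructor
  · intro h
    have := congrFun (congrFun h (0 + (a + c))) 0
    simp only [Matrix.smul_apply, hent, smul_eq_mul, mul_one] at this
    rw [pow_val_inj] at this
    have hda : (∑ j, d j * a j) = ∑ j, a j * d j := by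
      exact Finset.sum_congr rfl fun j _ => mul_comm _ _
    rw [hda] at this
    rw [this, CharTwo.add_self_eq_zero]
  · intro h
    have hda : (∑ j, d j * a j) = ∑ j, a j * d j := by
      exact Finset.sum_congr rfl fun j _ => mul_comm _ _
    have : (∑ j, b j * c j : ZMod 2) = ∑ j, d j * a j := by
      rw [hda]
      have h2 := CharTwo.add_eq_iff_eq_add.mp h
      rw [zero_add] at h2
      exact h2.symm
    rw [this]
end

section
/- Let n : ℕ and let G be an n-qubit stabilizer group. Then the stabilizer state ρ_G := (2^n : ℂ)⁻¹ • ∑ g ∈ G, g satisfies: ρ_G is Hermitian (ρ_Gᴴ = ρ_G), idempotent (ρ_G * ρ_G = ρ_G), and has trace 1; hence ρ_G is an orthogonal projection of rank 1, i.e. a pure quantum state. -/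
open Matrix

/-- The Hermitian `n`-qubit Pauli `P(a,b) = I^{m(a,b)} • W(a,b)`. -/
noncomputable def PauliP (n : ℕ) (a b : Fin n → ZMod 2) :
    Matrix (Fin n → ZMod 2) (Fin n → ZMod 2) ℂ :=
  Complex.I ^ (Finset.univ.filter fun j => a j = 1 ∧ b j = 1).card • W n a b

lemma zmod2_cases (x : ZMod 2) : x = 0 ∨ x = 1 := by revert x; decide

lemma neg_one_pow_val_add (s t : ZMod 2) :
    (-1 : ℂ) ^ ((s + t).val) = (-1) ^ s.val * (-1) ^ t.val := by
  rcases zmod2_cases s with h | h <;> rcases zmod2_cases t with h' | h' <;>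
    subst h <;> subst h' <;>
    simp [show ZMod.val (0 : ZMod 2) = 0 from rfl, show ZMod.val (1 : ZMod 2) = 1 from rfl,
      show ((1 : ZMod 2) + 1) = 0 from rfl]

lemma neg_one_pow_val_natCast (m : ℕ) : (-1 : ℂ) ^ ((m : ZMod 2).val) = (-1) ^ m := by
  rw [ZMod.val_natCast]
  conv_rhs => rw [← Nat.div_add_mod m 2]
  rw [pow_add, pow_mul]
  norm_num

lemma sum_mul_eq_card (n : ℕ) (a b : Fin n → ZMod 2) :
    (∑ j, b j * a j : ZMod 2) =
      ((Finset.univ.filter fun j => a j = 1 ∧ b j = 1).card : ZMod 2) := by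
  have h : ∀ j, b j * a j = if (a j = 1 ∧ b j = 1) then (1 : ZMod 2) else 0 := by
    intro j
    rcases zmod2_cases (a j) with h | h <;> rcases zmod2_cases (b j) with h' | h' <;>
      simp [h, h']
  simp_rw [h]
  rw [Finset.sum_boole]

lemma pi_add_add_cancel {n : ℕ} (x a : Fin n → ZMod 2) : x + a + a = x := by
  funext j
  simp only [Pi.add_apply]
  rcases zmod2_cases (a j) with h | h <;> rcases zmod2_cases (x j) with h' | h' <;>
    simp [h, h'] <;> decide

lemma eq_add_comm {n : ℕ} (x y a : Fin n → ZMod 2) : x = y + a ↔ y = x + a := by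
  constructor <;> rintro rfl <;> rw [pi_add_add_cancel]

lemma pauliP_hermitian (n : ℕ) (a b : Fin n → ZMod 2) : (PauliP n a b)ᴴ = PauliP n a b := by
  set m := (Finset.univ.filter fun j => a j = 1 ∧ b j = 1).card with hm
  have hba : (∑ j, b j * a j : ZMod 2) = (m : ZMod 2) := sum_mul_eq_card n a b
  ext x y
  show star (PauliP n a b y x) = PauliP n a b x y
  simp only [PauliP, Matrix.smul_apply, smul_eq_mul, W, ← hm]
  by_cases hxy : x = y + a
  · have hyx : y = x + a := (eq_add_comm x y a).mp hxy
    rw [if_pos hyx, if_pos hxy, hxy]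
    have hbx : (∑ j, b j * (y + a) j : ZMod 2) = (∑ j, b j * y j) + ∑ j, b j * a j := by
      simp [Pi.add_apply, mul_add, Finset.sum_add_distrib]
    rw [hbx, hba, neg_one_pow_val_add, neg_one_pow_val_natCast]
    simp only [star_mul', star_pow, Complex.star_def, Complex.conj_I, _root_.map_mul, map_pow,
      map_neg, RingHom.map_one]
    rw [neg_pow]
    have hmm : ((-1 : ℂ) ^ m) * ((-1 : ℂ) ^ m) = 1 := by rw [← mul_pow]; norm_num
    linear_combination (Complex.I ^ m * (-1 : ℂ) ^ ((∑ j, b j * y j : ZMod 2)).val) * hmm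
  · have hyx : ¬ (y = x + a) := fun h => hxy ((eq_add_comm y x a).mp h)
    rw [if_neg hyx, if_neg hxy]
    simp

lemma W_zero_zero (n : ℕ) : W n 0 0 = 1 := by
  ext x y
  simp [W, Matrix.one_apply, eq_comm]

lemma pauliP_zero_zero (n : ℕ) : PauliP n 0 0 = 1 := by
  rw [PauliP, W_zero_zero]
  have : (Finset.univ.filter fun j : Fin n => (0 : ZMod 2) = 1 ∧ (0 : ZMod 2) = 1) = ∅ := by
    simp
  simp [Pi.zero_apply, this]

lemma char_sum_eq_zero {n : ℕ} {b : Fin n → ZMod 2} (hb : b ≠ 0) :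
    ∑ x : Fin n → ZMod 2, (-1 : ℂ) ^ (∑ j, b j * x j : ZMod 2).val = 0 := by
  obtain ⟨j, hj⟩ : ∃ j, b j = 1 := by
    by_contra h
    push_neg at h
    exact hb (funext fun j => (zmod2_cases (b j)).resolve_right (h j))
  set e : Fin n → ZMod 2 := Pi.single j 1 with he
  have hbe : (∑ k, b k * e k : ZMod 2) = 1 := by
    rw [Finset.sum_eq_single_of_mem j (Finset.mem_univ j)]
    · simp [he, hj]
    · intro k _ hk
      simp [he, Pi.single_eq_of_ne hk]
  have key : ∀ x, (∑ k, b k * (x + e) k : ZMod 2) = (∑ k, b k * x k) + 1 := by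
    intro x
    simp only [Pi.add_apply, mul_add, Finset.sum_add_distrib, hbe]
  have h2 : (∑ x : Fin n → ZMod 2, (-1 : ℂ) ^ (∑ k, b k * x k : ZMod 2).val)
      = ∑ x : Fin n → ZMod 2, (-1 : ℂ) ^ (∑ k, b k * (x + e) k : ZMod 2).val :=
    Fintype.sum_equiv (Equiv.addRight e)
      (fun x => (-1 : ℂ) ^ (∑ k, b k * (x + e) k : ZMod 2).val)
      (fun x => (-1 : ℂ) ^ (∑ k, b k * x k : ZMod 2).val) (fun x => rfl) |>.symm
  have h3 : ∀ x : Fin n → ZMod 2, (-1 : ℂ) ^ (∑ k, b k * (x + e) k : ZMod 2).val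
      = -((-1 : ℂ) ^ (∑ k, b k * x k : ZMod 2).val) := by
    intro x
    rw [key, neg_one_pow_val_add]
    simp [show ZMod.val (1 : ZMod 2) = 1 from rfl]
  simp only [h3, Finset.sum_neg_distrib] at h2
  linear_combination h2 / 2

lemma trace_W_a_ne {n : ℕ} {a : Fin n → ZMod 2} (b : Fin n → ZMod 2) (ha : a ≠ 0) :
    (W n a b).trace = 0 := by
  simp only [Matrix.trace, Matrix.diag, W, left_eq_add]
  simp [ha]

lemma trace_W_b_ne {n : ℕ} {b : Fin n → ZMod 2} (hb : b ≠ 0) :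
    (W n 0 b).trace = 0 := by
  simp only [Matrix.trace, Matrix.diag, W, add_zero, if_pos rfl]
  exact char_sum_eq_zero hb

lemma trace_mat_one (n : ℕ) :
    (1 : Matrix (Fin n → ZMod 2) (Fin n → ZMod 2) ℂ).trace = 2 ^ n := by
  rw [Matrix.trace_one]
  simp [Fintype.card_fun]

lemma rank_eq_one_of_proj {m : Type*} [Fintype m] [DecidableEq m]
    {A : Matrix m m ℂ} (hidem : A * A = A) (htr : A.trace = 1) : A.rank = 1 := by
  set f := A.mulVecLin with hf
  have hff : f ∘ₗ f = f := by rw [hf, ← Matrix.mulVecLin_mul, hidem]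
  have hproj : LinearMap.IsProj (LinearMap.range f) f := by
    refine ⟨fun x => LinearMap.mem_range_self f x, ?_⟩
    rintro x ⟨y, rfl⟩
    rw [← LinearMap.comp_apply, hff]
  have htrf : LinearMap.trace ℂ _ f = (Module.finrank ℂ (LinearMap.range f) : ℂ) :=
    hproj.trace
  have htrA : LinearMap.trace ℂ _ f = A.trace := by
    rw [LinearMap.trace_eq_matrix_trace ℂ (Pi.basisFun ℂ m) f,
      LinearMap.toMatrix_eq_toMatrix', hf, ← Matrix.toLin'_apply', LinearMap.toMatrix'_toLin']
  have : ((A.rank : ℕ) : ℂ) = 1 := by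
    rw [Matrix.rank, ← htrf, htrA, htr]
  exact_mod_cast this

/-- An `n`-qubit stabilizer group: a commutative subgroup of the units of the matrix
ring all of whose elements are signed Hermitian Paulis, avoiding `-1`, of order `2^n`. -/
def IsStabilizerGroup (n : ℕ)
    (G : Subgroup (Matrix (Fin n → ZMod 2) (Fin n → ZMod 2) ℂ)ˣ) : Prop :=
  (∀ g ∈ G, ∀ h ∈ G, g * h = h * g) ∧
  (∀ g ∈ G, ∃ (ε : ℂ) (a b : Fin n → ZMod 2), (ε = 1 ∨ ε = -1) ∧
    (g : Matrix (Fin n → ZMod 2) (Fin n → ZMod 2) ℂ) = ε • PauliP n a b) ∧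
  (-1 : (Matrix (Fin n → ZMod 2) (Fin n → ZMod 2) ℂ)ˣ) ∉ G ∧
  Nat.card G = 2 ^ n

/-- The stabilizer state `ρ_G = 2^{-n} ∑_{g ∈ G} g` of a stabilizer group `G`. -/
noncomputable def stabState (n : ℕ)
    (G : Subgroup (Matrix (Fin n → ZMod 2) (Fin n → ZMod 2) ℂ)ˣ) :
    Matrix (Fin n → ZMod 2) (Fin n → ZMod 2) ℂ :=
  ((2 : ℂ) ^ n)⁻¹ • ∑ᶠ g ∈ (G : Set (Matrix (Fin n → ZMod 2) (Fin n → ZMod 2) ℂ)ˣ),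
    (g : Matrix (Fin n → ZMod 2) (Fin n → ZMod 2) ℂ)

theorem stmt_4 (n : ℕ)
    (G : Subgroup (Matrix (Fin n → ZMod 2) (Fin n → ZMod 2) ℂ)ˣ)
    (hG : IsStabilizerGroup n G) :
    (stabState n G)ᴴ = stabState n G ∧
    stabState n G * stabState n G = stabState n G ∧
    (stabState n G).trace = 1 ∧
    (stabState n G).rank = 1 := by
  classical
  obtain ⟨hcomm, hpauli, hneg, hcard⟩ := hG
  have hfinG : Finite G := Nat.finite_of_card_ne_zero (by rw [hcard]; positivity)
  have hfin : (G : Set (Matrix (Fin n → ZMod 2) (Fin n → ZMod 2) ℂ)ˣ).Finite :=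
    Set.toFinite _
  set T := hfin.toFinset with hTdef
  have hmemT : ∀ g, g ∈ T ↔ g ∈ G := fun g => hfin.mem_toFinset
  have hTcard : T.card = 2 ^ n := by
    have h1 : Nat.card G = Nat.card ↥(G : Set (Matrix (Fin n → ZMod 2) (Fin n → ZMod 2) ℂ)ˣ) := by
      rw [SetLike.coe_sort_coe]
    rw [← hcard, h1, Nat.card_coe_set_eq, Set.ncard_eq_toFinset_card _ hfin]
  set S : Matrix (Fin n → ZMod 2) (Fin n → ZMod 2) ℂ :=
    ∑ g ∈ T, (g : Matrix (Fin n → ZMod 2) (Fin n → ZMod 2) ℂ) with hSdef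
  have hstab : stabState n G = ((2 : ℂ) ^ n)⁻¹ • S := by
    rw [stabState, ← hfin.coe_toFinset, finsum_mem_coe_finset, hSdef]
  have h2n : ((2 : ℂ) ^ n) ≠ 0 := pow_ne_zero _ two_ne_zero
  -- Hermitian
  have hg_herm : ∀ g ∈ G,
      ((g : Matrix (Fin n → ZMod 2) (Fin n → ZMod 2) ℂ))ᴴ = g := by
    intro g hg
    obtain ⟨ε, a, b, hε, hmat⟩ := hpauli g hg
    rw [hmat, Matrix.conjTranspose_smul, pauliP_hermitian]
    rcases hε with rfl | rfl <;> simp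
  have hSherm : Sᴴ = S := by
    rw [hSdef, Matrix.conjTranspose_sum]
    exact Finset.sum_congr rfl fun g hg => hg_herm g ((hmemT g).mp hg)
  have hherm : (stabState n G)ᴴ = stabState n G := by
    rw [hstab, Matrix.conjTranspose_smul, hSherm]
    congr 1
    simp
  -- Idempotent
  have hmul : S * S = ((2 : ℂ) ^ n) • S := by
    rw [hSdef, Finset.sum_mul]
    have hrow : ∀ g ∈ T,
        (g : Matrix (Fin n → ZMod 2) (Fin n → ZMod 2) ℂ) *
          (∑ h ∈ T, (h : Matrix (Fin n → ZMod 2) (Fin n → ZMod 2) ℂ)) =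
        ∑ h ∈ T, (h : Matrix (Fin n → ZMod 2) (Fin n → ZMod 2) ℂ) := by
      intro g hgT
      have hg := (hmemT g).mp hgT
      rw [Finset.mul_sum]
      refine Finset.sum_bij' (fun h _ => g * h) (fun h _ => g⁻¹ * h) ?_ ?_ ?_ ?_ ?_
      · intro h hh
        exact (hmemT _).mpr (G.mul_mem hg ((hmemT h).mp hh))
      · intro h hh
        exact (hmemT _).mpr (G.mul_mem (G.inv_mem hg) ((hmemT h).mp hh))
      · intro h hh
        exact inv_mul_cancel_left g h
      · intro h hh
        exact mul_inv_cancel_left g h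
      · intro h hh
        exact (Units.val_mul g h).symm
    rw [Finset.sum_congr rfl hrow, Finset.sum_const, hTcard]
    rw [← Nat.cast_smul_eq_nsmul ℂ]
    norm_num
  have hidem : stabState n G * stabState n G = stabState n G := by
    rw [hstab, Matrix.smul_mul, Matrix.mul_smul, hmul, smul_smul, smul_smul]
    congr 1
    field_simp
  -- Trace
  have htraceg : ∀ g ∈ T, g ≠ (1 : (Matrix (Fin n → ZMod 2) (Fin n → ZMod 2) ℂ)ˣ) →
      ((g : Matrix (Fin n → ZMod 2) (Fin n → ZMod 2) ℂ)).trace = 0 := by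
    intro g hgT hg1
    obtain ⟨ε, a, b, hε, hmat⟩ := hpauli g ((hmemT g).mp hgT)
    by_cases ha : a = 0
    · subst ha
      by_cases hb : b = 0
      · subst hb
        exfalso
        rw [pauliP_zero_zero] at hmat
        rcases hε with rfl | rfl
        · exact hg1 (Units.ext (by simpa using hmat))
        · refine hneg ?_
          have hgeq : g = (-1 : (Matrix (Fin n → ZMod 2) (Fin n → ZMod 2) ℂ)ˣ) :=
            Units.ext (by rw [hmat]; simp)
          rw [← hgeq]
          exact (hmemT g).mp hgT
      · rw [hmat, Matrix.trace_smul, PauliP, Matrix.trace_smul, trace_W_b_ne hb]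
        simp
    · rw [hmat, Matrix.trace_smul, PauliP, Matrix.trace_smul, trace_W_a_ne b ha]
      simp
  have htrS : S.trace = 2 ^ n := by
    rw [hSdef, Matrix.trace_sum, Finset.sum_eq_single
      (1 : (Matrix (Fin n → ZMod 2) (Fin n → ZMod 2) ℂ)ˣ)]
    · rw [Units.val_one, trace_mat_one]
    · exact fun g hgT hg1 => htraceg g hgT hg1
    · exact fun h1 => absurd ((hmemT 1).mpr G.one_mem) h1
  have htrace : (stabState n G).trace = 1 := by
    rw [hstab, Matrix.trace_smul, htrS, smul_eq_mul, inv_mul_cancel₀ h2n]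
  exact ⟨hherm, hidem, htrace, rank_eq_one_of_proj hidem htrace⟩
end

section
/- Let n : ℕ. In the group Equiv.Perm (Fin n → ZMod 2) of permutations of 𝔽₂ⁿ, define for each i the NOT gate permutation NOT_i : x ↦ x + δ_i (where δ_i is the i-th standard basis vector), and for each pair i ≠ j the CNOT gate permutation CNOT_{i,j} : x ↦ x + (x i) • δ_j. Then the subgroup generated by { NOT_i : i } ∪ { CNOT_{i,j} : i ≠ j } is exactly the set of affine permutations, i.e. permutations of the form x ↦ M.mulVec x + c where M : Matrix (Fin n) (Fin n) (ZMod 2) is invertible and c : Fin n → ZMod 2. -/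
open Matrix

/-- The generators of CNOT circuits acting on computational basis states:
NOT gates `x ↦ x + δ_i` and CNOT gates `x ↦ x + (x i) • δ_j` for `i ≠ j`. -/
def cnotGens (n : ℕ) : Set (Equiv.Perm (Fin n → ZMod 2)) :=
  {π | (∃ i : Fin n, ∀ x, π x = x + (Pi.single i 1 : Fin n → ZMod 2)) ∨
       (∃ i j : Fin n, i ≠ j ∧ ∀ x, π x = x + (x i) • (Pi.single j 1 : Fin n → ZMod 2))}

namespace CnotAux

lemma zmod2_cases (a : ZMod 2) : a = 0 ∨ a = 1 := by revert a; decide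

lemma single_smul {n : ℕ} (j : Fin n) (a : ZMod 2) :
    a • (Pi.single j 1 : Fin n → ZMod 2) = Pi.single j a := by
  funext k
  by_cases h : k = j
  · subst h; simp
  · simp [Pi.single_eq_of_ne h]

lemma cnot_invol {n : ℕ} (i j : Fin n) (hij : i ≠ j) :
    Function.Involutive
      (fun x : Fin n → ZMod 2 => x + (x i) • (Pi.single j 1 : Fin n → ZMod 2)) := by
  intro x
  funext k
  simp only [single_smul, Pi.add_apply]
  have hii : (Pi.single j (x i) : Fin n → ZMod 2) i = 0 :=
    Pi.single_eq_of_ne (hij) _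
  rw [hii, add_zero, add_assoc, CharTwo.add_self_eq_zero, add_zero]

/-- The CNOT permutation with control `i` and target `j`. -/
def cnotPerm {n : ℕ} (i j : Fin n) (hij : i ≠ j) : Equiv.Perm (Fin n → ZMod 2) :=
  (cnot_invol i j hij).toPerm _

lemma cnotPerm_apply {n : ℕ} (i j : Fin n) (hij : i ≠ j) (x : Fin n → ZMod 2) :
    cnotPerm i j hij x = x + (x i) • (Pi.single j 1 : Fin n → ZMod 2) := rfl

lemma cnotPerm_mem {n : ℕ} (i j : Fin n) (hij : i ≠ j) :
    cnotPerm i j hij ∈ Subgroup.closure (cnotGens n) :=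
  Subgroup.subset_closure (Or.inr ⟨i, j, hij, fun x => rfl⟩)

lemma addRight_mem {n : ℕ} (c : Fin n → ZMod 2) :
    Equiv.addRight c ∈ Subgroup.closure (cnotGens n) := by
  have key : ∀ s : Finset (Fin n),
      Equiv.addRight (∑ i ∈ s, Pi.single i (c i)) ∈ Subgroup.closure (cnotGens n) := by
    intro s
    induction s using Finset.induction_on with
    | empty =>
        have : Equiv.addRight (∑ i ∈ (∅ : Finset (Fin n)), Pi.single i (c i)) =
            (1 : Equiv.Perm (Fin n → ZMod 2)) := by
          ext x; simp
        rw [this]; exact one_mem _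
    | @insert a s ha ih =>
        have hsum : Equiv.addRight (∑ i ∈ insert a s, Pi.single i (c i)) =
            Equiv.addRight (∑ i ∈ s, Pi.single i (c i)) * Equiv.addRight (Pi.single a (c a)) := by
          ext x
          simp [Finset.sum_insert ha, Equiv.Perm.mul_apply, add_assoc, add_comm]
        rw [hsum]
        refine mul_mem ih ?_
        rcases zmod2_cases (c a) with h | h
        · have : Equiv.addRight (Pi.single a (c a)) = (1 : Equiv.Perm (Fin n → ZMod 2)) := by
            ext x; simp [h]
          rw [this]; exact one_mem _
        · refine Subgroup.subset_closure (Or.inl ⟨a, fun x => ?_⟩)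
          simp [h]
  have := key Finset.univ
  rwa [Finset.univ_sum_single] at this

lemma transvection_mulVec {n : ℕ} (i j : Fin n) (c : ZMod 2) (x : Fin n → ZMod 2) :
    (Matrix.transvection i j c).mulVec x = x + Pi.single i (c * x j) := by
  rw [Matrix.transvection, Matrix.add_mulVec, Matrix.one_mulVec,
    Matrix.single_mulVec]
  congr 1

/-- Permutation corresponding to a transvection structure. -/
noncomputable def tPerm {n : ℕ} (t : Matrix.TransvectionStruct (Fin n) (ZMod 2)) :
    Equiv.Perm (Fin n → ZMod 2) :=
  if h : t.c = 0 then 1 else cnotPerm t.j t.i (Ne.symm t.hij)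

lemma tPerm_apply {n : ℕ} (t : Matrix.TransvectionStruct (Fin n) (ZMod 2))
    (x : Fin n → ZMod 2) : tPerm t x = t.toMatrix.mulVec x := by
  rcases t with ⟨i, j, hij, c⟩
  rw [Matrix.TransvectionStruct.toMatrix_mk, transvection_mulVec]
  rcases zmod2_cases c with h | h
  · subst h
    simp [tPerm]
  · subst h
    simp only [tPerm]
    rw [dif_neg (by decide)]
    rw [cnotPerm_apply, single_smul, one_mul]

lemma tPerm_mem {n : ℕ} (t : Matrix.TransvectionStruct (Fin n) (ZMod 2)) :
    tPerm t ∈ Subgroup.closure (cnotGens n) := by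
  unfold tPerm
  split
  · exact one_mem _
  · exact cnotPerm_mem _ _ _

lemma listProd_apply {n : ℕ} (l : List (Matrix.TransvectionStruct (Fin n) (ZMod 2)))
    (x : Fin n → ZMod 2) :
    (l.map tPerm).prod x = (l.map Matrix.TransvectionStruct.toMatrix).prod.mulVec x := by
  induction l generalizing x with
  | nil => simp
  | cons t l ih =>
      simp only [List.map_cons, List.prod_cons, Equiv.Perm.mul_apply]
      rw [ih, tPerm_apply, Matrix.mulVec_mulVec]

lemma listProd_mem {n : ℕ} (l : List (Matrix.TransvectionStruct (Fin n) (ZMod 2))) :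
    (l.map tPerm).prod ∈ Subgroup.closure (cnotGens n) := by
  refine Subgroup.list_prod_mem _ ?_
  intro p hp
  rcases List.mem_map.1 hp with ⟨t, _, rfl⟩
  exact tPerm_mem t

end CnotAux

theorem stmt_8 (n : ℕ) (π : Equiv.Perm (Fin n → ZMod 2)) :
    π ∈ Subgroup.closure (cnotGens n) ↔
      ∃ (M : Matrix (Fin n) (Fin n) (ZMod 2)) (c : Fin n → ZMod 2),
        IsUnit M ∧ ∀ x, π x = M.mulVec x + c := by
  constructor
  · intro hπ
    induction hπ using Subgroup.closure_induction with
    | mem g hg =>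
        rcases hg with ⟨i, hi⟩ | ⟨i, j, hij, hij'⟩
        · exact ⟨1, Pi.single i 1, isUnit_one, fun x => by rw [hi x, Matrix.one_mulVec]⟩
        · refine ⟨Matrix.transvection j i 1, 0, ?_, fun x => ?_⟩
          · rw [Matrix.isUnit_iff_isUnit_det, Matrix.det_transvection_of_ne _ _ (Ne.symm hij)]
            exact isUnit_one
          · rw [hij' x, CnotAux.transvection_mulVec, one_mul, CnotAux.single_smul, add_zero]
    | one => exact ⟨1, 0, isUnit_one, fun x => by simp [Matrix.one_mulVec]⟩
    | mul g h _ _ ihg ihh =>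
        rcases ihg with ⟨M₁, c₁, hM₁, h₁⟩
        rcases ihh with ⟨M₂, c₂, hM₂, h₂⟩
        refine ⟨M₁ * M₂, M₁.mulVec c₂ + c₁, hM₁.mul hM₂, fun x => ?_⟩
        rw [Equiv.Perm.mul_apply, h₂ x, h₁, Matrix.mulVec_add, Matrix.mulVec_mulVec, add_assoc]
    | inv g _ ihg =>
        rcases ihg with ⟨M, c, hM, h⟩
        have hdet : IsUnit M.det := (Matrix.isUnit_iff_isUnit_det M).1 hM
        refine ⟨M⁻¹, M⁻¹.mulVec (-c), ?_, fun x => ?_⟩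
        · rw [Matrix.isUnit_iff_isUnit_det, Matrix.det_nonsing_inv]
          exact (Ring.inverse_unit hdet.unit) ▸ (hdet.unit⁻¹).isUnit
        · have : g (M⁻¹.mulVec x + M⁻¹.mulVec (-c)) = x := by
            rw [h, Matrix.mulVec_add, Matrix.mulVec_mulVec, Matrix.mulVec_mulVec,
              Matrix.mul_nonsing_inv _ hdet, Matrix.one_mulVec, Matrix.one_mulVec]
            simp
          calc g⁻¹ x = g⁻¹ (g (M⁻¹.mulVec x + M⁻¹.mulVec (-c))) := by rw [this]
            _ = M⁻¹.mulVec x + M⁻¹.mulVec (-c) := g.symm_apply_apply _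
  · rintro ⟨M, c, hM, h⟩
    obtain ⟨L, L', D, hD⟩ := Matrix.Pivot.exists_list_transvec_mul_diagonal_mul_list_transvec M
    have hdet : IsUnit M.det := (Matrix.isUnit_iff_isUnit_det M).1 hM
    have hDdet : IsUnit (Matrix.diagonal D).det := by
      have h1 := Matrix.TransvectionStruct.det_toMatrix_prod L
      have h2 := Matrix.TransvectionStruct.det_toMatrix_prod L'
      rw [hD, Matrix.det_mul, Matrix.det_mul, h1, h2, one_mul, mul_one] at hdet
      exact hdet
    have hD1 : Matrix.diagonal D = 1 := by
      rw [Matrix.det_diagonal] at hDdet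
      have hone : ∀ i, D i = 1 := by
        intro i
        rcases CnotAux.zmod2_cases (D i) with h0 | h1
        · exfalso
          rw [Finset.prod_eq_zero (Finset.mem_univ i) h0] at hDdet
          exact hDdet.ne_zero rfl
        · exact h1
      rw [show D = fun _ => 1 from funext hone, Matrix.diagonal_one]
    have hM' : M = ((L ++ L').map Matrix.TransvectionStruct.toMatrix).prod := by
      rw [List.map_append, List.prod_append, hD, hD1, Matrix.mul_one]
    have hπeq : π = Equiv.addRight c * ((L ++ L').map CnotAux.tPerm).prod := by
      ext x
      rw [Equiv.Perm.mul_apply, CnotAux.listProd_apply, ← hM']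
      rw [h x]
      rfl
    rw [hπeq]
    exact mul_mem (CnotAux.addRight_mem c) (CnotAux.listProd_mem _)
end

section
/- Let k : ℕ and let f : (Fin k → ZMod 2) → ZMod 2 be any function. Then there exist N : ℕ, a matrix M₀ : Matrix (Fin N) (Fin N) (ZMod 2), and a family M : Fin k → Matrix (Fin N) (Fin N) (ZMod 2) such that: (1) for every assignment a : Fin k → ZMod 2, det (M₀ + ∑ i, (a i) • M i) = f a; (2) for all i ≠ j, there is no column index at which both M i and M j have a nonzero column (the M i are nonzero on pairwise disjoint sets of columns); (3) every column of M₀ is nonzero; and (4) for every i and every column index c at which M i has a nonzero column, the c-th column of M i differs from the c-th column of M₀. -/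
open Matrix

namespace Stmt15Aux



lemma z1 (x : ZMod 2) (h : x ≠ 0) : x = 1 := by revert h; revert x; decide
lemma zadd (x y : ZMod 2) (h : x + y = 0) : x = y := by revert h; revert x y; decide
lemma zself (x : ZMod 2) : x + x = 0 := by revert x; decide

def ext0 {k : ℕ} (m : Fin k → ZMod 2) (n : ℕ) : ZMod 2 :=
  if h : n < k then m ⟨n, h⟩ else 0

lemma ext0_add {k} (a b : Fin k → ZMod 2) (n : ℕ) :
    ext0 (fun i => a i + b i) n = ext0 a n + ext0 b n := by
  unfold ext0; split <;> simp

lemma ext0_eq {k} (m : Fin k → ZMod 2) (n : ℕ) (h : n < k) : ext0 m n = m ⟨n, h⟩ := dif_pos h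
lemma ext0_zero {k} (m : Fin k → ZMod 2) (n : ℕ) (h : ¬ n < k) : ext0 m n = 0 := dif_neg h

def GG {k : ℕ} (m : Fin k → ZMod 2) : Matrix (Fin (k+2)) (Fin (k+2)) (ZMod 2) :=
  Matrix.of fun x y =>
    if (x : ℕ) = 0 then (if (y : ℕ) = k+1 then 1 else 0)
    else if (x : ℕ) = k+1 then ext0 m y
    else (if (y:ℕ)+1 = (x:ℕ) then 1 + ext0 m y else 0) +
         (if (y:ℕ) = (x:ℕ) then 1 else 0)

def DD {k : ℕ} (i : Fin k) : Matrix (Fin (k+2)) (Fin (k+2)) (ZMod 2) :=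
  Matrix.of fun x y =>
    if (y:ℕ) = (i:ℕ) ∧ ((x:ℕ) = (i:ℕ)+1 ∨ (x:ℕ) = k+1) then 1 else 0

lemma sum_DD {k} (a : Fin k → ZMod 2) (x y : Fin (k+2)) :
    ∑ i, a i * DD i x y =
      if ((x:ℕ) = (y:ℕ)+1 ∨ (x:ℕ) = k+1) then ext0 a (y:ℕ) else 0 := by
  by_cases hy : (y:ℕ) < k
  · rw [Finset.sum_eq_single (⟨(y:ℕ), hy⟩ : Fin k)]
    · rw [ext0_eq a _ hy]
      simp only [DD, Matrix.of_apply]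
      by_cases hx : ((x:ℕ) = (y:ℕ)+1 ∨ (x:ℕ) = (k:ℕ)+1) <;> simp [hx]
    · intro i _ hne
      simp only [DD, Matrix.of_apply]
      rw [if_neg, mul_zero]
      rintro ⟨h1, -⟩
      exact hne (Fin.ext h1.symm)
    · intro h; exact absurd (Finset.mem_univ _) h
  · rw [ext0_zero a _ hy, ite_self]
    apply Finset.sum_eq_zero
    intro i _
    simp only [DD, Matrix.of_apply]
    rw [if_neg, mul_zero]
    rintro ⟨h1, -⟩
    exact hy (h1 ▸ i.isLt)

lemma GG_add {k} (a b : Fin k → ZMod 2) (x y : Fin (k+2)) :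
    GG (fun t => a t + b t) x y = GG b x y + ∑ i, a i * DD i x y := by
  rw [sum_DD]
  by_cases hx0 : (x:ℕ) = 0
  · have hc : ¬((x:ℕ) = (y:ℕ)+1 ∨ (x:ℕ) = k+1) := by omega
    simp [GG, hx0, hc]
  · by_cases hx1 : (x:ℕ) = k+1
    · have hc : ((x:ℕ) = (y:ℕ)+1 ∨ (x:ℕ) = k+1) := Or.inr hx1
      simp only [GG, Matrix.of_apply, if_neg hx0, if_pos hx1, if_pos hc, ext0_add]
      ring
    · by_cases hxy : (y:ℕ)+1 = (x:ℕ)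
      · have hc : ((x:ℕ) = (y:ℕ)+1 ∨ (x:ℕ) = k+1) := Or.inl hxy.symm
        have hyx : ¬ (y:ℕ) = (x:ℕ) := by omega
        simp only [GG, Matrix.of_apply, if_neg hx0, if_neg hx1, if_pos hxy, if_neg hyx,
          if_pos hc, ext0_add]
        ring
      · have hc : ¬((x:ℕ) = (y:ℕ)+1 ∨ (x:ℕ) = k+1) := by omega
        simp only [GG, Matrix.of_apply, if_neg hx0, if_neg hx1, if_neg hxy, if_neg hc]
        ring


lemma GG_row0 {k} (m : Fin k → ZMod 2) (x y : Fin (k+2)) (hx : (x:ℕ) = 0) :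
    GG m x y = if (y:ℕ) = k+1 then 1 else 0 := by
  simp only [GG, Matrix.of_apply]; rw [if_pos hx]

lemma GG_rowlast {k} (m : Fin k → ZMod 2) (x y : Fin (k+2)) (hx : (x:ℕ) = k+1) :
    GG m x y = ext0 m (y:ℕ) := by
  simp only [GG, Matrix.of_apply]; rw [if_neg (by omega), if_pos hx]

lemma GG_rowmid {k} (m : Fin k → ZMod 2) (x y : Fin (k+2)) (hx0 : ¬(x:ℕ) = 0)
    (hx1 : ¬(x:ℕ) = k+1) :
    GG m x y = (if (y:ℕ)+1 = (x:ℕ) then 1 + ext0 m (y:ℕ) else 0) +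
         (if (y:ℕ) = (x:ℕ) then 1 else 0) := by
  simp only [GG, Matrix.of_apply]; rw [if_neg hx0, if_neg hx1]

lemma sum_natif {k : ℕ} (c : ℕ) (hc : c < k+2) (g : Fin (k+2) → ZMod 2) :
    (∑ j : Fin (k+2), if (j:ℕ) = c then g j else 0) = g ⟨c, hc⟩ := by
  rw [Finset.sum_eq_single (⟨c, hc⟩ : Fin (k+2))]
  · exact if_pos rfl
  · intro j _ hne; exact if_neg (fun h => hne (Fin.ext h))
  · intro h; exact absurd (Finset.mem_univ _) h

lemma detGG {k} (m : Fin k → ZMod 2) :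
    (GG m).det = if ∀ i, m i = 0 then 0 else 1 := by
  by_cases hm : ∀ i, m i = 0
  · rw [if_pos hm]
    apply Matrix.det_eq_zero_of_row_eq_zero (⟨k+1, by omega⟩ : Fin (k+2))
    intro j
    rw [GG_rowlast m _ j rfl]
    unfold ext0; split
    · exact hm _
    · rfl
  · rw [if_neg hm]
    apply z1
    intro hdet
    obtain ⟨v, hv0, hv⟩ := Matrix.exists_mulVec_eq_zero_iff.mpr hdet
    -- row 0
    have hrow0 : v ⟨k+1, by omega⟩ = 0 := by
      have h := congrFun hv ⟨0, by omega⟩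
      simp only [Matrix.mulVec, dotProduct, Pi.zero_apply] at h
      have hs : ∀ j : Fin (k+2), GG m ⟨0, by omega⟩ j * v j =
          (if (j:ℕ) = k+1 then v j else 0) := by
        intro j
        rw [GG_row0 m _ j rfl]
        by_cases hj : (j:ℕ) = k+1
        · rw [if_pos hj, if_pos hj, one_mul]
        · rw [if_neg hj, if_neg hj, zero_mul]
      rw [Finset.sum_congr rfl (fun j _ => hs j), sum_natif (k+1) (by omega)] at h
      exact h
    -- middle rows
    have hrec : ∀ c, ∀ _ : c < k,
        v ⟨c+1, by omega⟩ = (1 + ext0 m c) * v ⟨c, by omega⟩ := by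
      intro c hc
      have h := congrFun hv ⟨c+1, by omega⟩
      simp only [Matrix.mulVec, dotProduct, Pi.zero_apply] at h
      have hs : ∀ j : Fin (k+2), GG m ⟨c+1, by omega⟩ j * v j =
          (if (j:ℕ) = c then (1 + ext0 m c) * v j else 0) +
          (if (j:ℕ) = c+1 then v j else 0) := by
        intro j
        rw [GG_rowmid m _ j (Nat.succ_ne_zero c) (by simp only [Fin.val_mk]; omega)]
        have hxval : ((⟨c+1, by omega⟩ : Fin (k+2)) : ℕ) = c + 1 := rfl
        rw [hxval]
        by_cases h1 : (j:ℕ) = c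
        · rw [if_pos (by omega), if_neg (by omega), if_pos h1, if_neg (by omega),
            add_zero, add_zero, h1]
        · by_cases h2 : (j:ℕ) = c+1
          · rw [if_neg (by omega), if_pos h2, if_neg h1, if_pos h2, zero_add, one_mul, zero_add]
          · rw [if_neg (by omega), if_neg h2, if_neg h1, if_neg h2]; simp
      rw [Finset.sum_congr rfl (fun j _ => hs j), Finset.sum_add_distrib,
        sum_natif c (by omega), sum_natif (c+1) (by omega)] at h
      exact (zadd _ _ h).symm
    -- last row
    have hlast : ∑ j : Fin (k+2), ext0 m (j:ℕ) * v j = 0 := by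
      have h := congrFun hv ⟨k+1, by omega⟩
      simp only [Matrix.mulVec, dotProduct, Pi.zero_apply] at h
      rw [Finset.sum_congr rfl (fun j _ => by rw [GG_rowlast m _ j rfl])] at h
      exact h
    push_neg at hm
    obtain ⟨i0, hi0⟩ := hm
    have hex : ∃ n, ∃ hn : n < k, m ⟨n, hn⟩ ≠ 0 := ⟨(i0:ℕ), i0.isLt, by simpa using hi0⟩
    set j0 := Nat.find hex with hj0def
    obtain ⟨hj0k, hj0m⟩ := Nat.find_spec hex
    have hmin : ∀ n, n < j0 → ∀ hn : n < k, m ⟨n, hn⟩ = 0 := by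
      intro n hn hnk
      by_contra hne
      exact (Nat.find_min hex hn) ⟨hnk, hne⟩
    have hj0m1 : ∀ h : j0 < k, m ⟨j0, h⟩ = 1 := fun h => z1 _ hj0m
    have claim1 : ∀ c, c ≤ j0 → ∀ h2 : c < k + 2, v ⟨c, h2⟩ = v ⟨0, by omega⟩ := by
      intro c
      induction c with
      | zero => intro _ _; rfl
      | succ c ih =>
        intro hc h2
        rw [hrec c (by omega), ext0_eq m c (by omega), hmin c (by omega), add_zero, one_mul]
        exact ih (by omega) (by omega)
    have claim2 : ∀ c, j0 < c → ∀ _ : c ≤ k, v ⟨c, by omega⟩ = 0 := by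
      intro c
      induction c with
      | zero => intro h _; exact absurd h (by omega)
      | succ c ih =>
        intro hc hck
        rcases Nat.lt_or_ge j0 c with h | h
        · rw [hrec c (by omega), ih h (by omega), mul_zero]
        · have hcj : c = j0 := by omega
          have hmc : m ⟨c, by omega⟩ = 1 := by subst hcj; exact hj0m1 _
          rw [hrec c (by omega), ext0_eq m c (by omega), hmc]
          have h11 : (1 + 1 : ZMod 2) = 0 := by decide
          rw [h11, zero_mul]
    have hv00 : v ⟨0, by omega⟩ = 0 := by
      rw [Finset.sum_eq_single (⟨j0, by omega⟩ : Fin (k+2))] at hlast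
      · have h1 : ext0 m (((⟨j0, by omega⟩ : Fin (k+2))) : ℕ) = 1 := by
          rw [ext0_eq m _ (show (((⟨j0, by omega⟩ : Fin (k+2))) : ℕ) < k from hj0k)]
          exact hj0m1 _
        rw [h1, one_mul] at hlast
        rw [← claim1 j0 le_rfl (by omega)]
        exact hlast
      · intro j _ hne
        by_cases hjk : (j:ℕ) < k
        · rcases Nat.lt_or_ge (j:ℕ) j0 with h | h
          · rw [ext0_eq m _ hjk, hmin _ h, zero_mul]
          · have hgt : j0 < (j:ℕ) := by
              rcases Nat.eq_or_lt_of_le h with h' | h'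
              · exact absurd (Fin.ext (a := j) (b := ⟨j0, by omega⟩) h'.symm) hne
              · exact h'
            have hvj : v j = 0 := by
              have := claim2 (j:ℕ) hgt (by omega)
              simpa using this
            rw [hvj, mul_zero]
        · rw [ext0_zero m _ hjk, zero_mul]
      · intro h'; exact absurd (Finset.mem_univ _) h'
    apply hv0
    funext x
    have hx2 : (x:ℕ) < k + 2 := x.isLt
    show v x = 0
    rcases Nat.lt_or_ge j0 (x:ℕ) with h | h
    · rcases Nat.lt_or_ge (x:ℕ) (k+1) with h' | h'
      · have := claim2 (x:ℕ) h (by omega)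
        simpa using this
      · have hxk : (x:ℕ) = k+1 := by omega
        have hx : x = (⟨k+1, by omega⟩ : Fin (k+2)) := Fin.ext hxk
        rw [hx]; exact hrow0
    · have := claim1 (x:ℕ) h hx2
      simp only [Fin.eta] at this
      rw [this, hv00]

lemma GG_col {k} (hk : 0 < k) (b : Fin k → ZMod 2) (y : Fin (k+2)) : ∃ x, GG b x y ≠ 0 := by
  rcases Nat.lt_or_ge (y:ℕ) k with hy | hy
  · by_cases hb : ext0 b (y:ℕ) = 0
    · refine ⟨⟨(y:ℕ)+1, by omega⟩, ?_⟩
      rw [GG_rowmid b _ y (Nat.succ_ne_zero _) (by simp only [Fin.val_mk]; omega)]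
      have hv : ((⟨(y:ℕ)+1, by omega⟩ : Fin (k+2)) : ℕ) = (y:ℕ)+1 := rfl
      rw [hv, if_pos rfl, if_neg (by omega), add_zero, hb, add_zero]
      exact one_ne_zero
    · refine ⟨⟨k+1, by omega⟩, ?_⟩
      rw [GG_rowlast b _ y rfl]
      exact hb
  · rcases Nat.eq_or_lt_of_le hy with hyk | hyk
    · refine ⟨⟨k, by omega⟩, ?_⟩
      rw [GG_rowmid b _ y (by simp only [Fin.val_mk]; omega) (by simp only [Fin.val_mk]; omega)]
      have hv : ((⟨k, by omega⟩ : Fin (k+2)) : ℕ) = k := rfl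
      rw [hv, if_neg (by omega), if_pos hyk.symm, zero_add]
      exact one_ne_zero
    · refine ⟨⟨0, by omega⟩, ?_⟩
      rw [GG_row0 b _ y rfl, if_pos (by omega)]
      exact one_ne_zero

theorem main_pos (k : ℕ) (hk : 0 < k) (f : (Fin k → ZMod 2) → ZMod 2) :
    ∃ (N : ℕ) (M₀ : Matrix (Fin N) (Fin N) (ZMod 2))
      (M : Fin k → Matrix (Fin N) (Fin N) (ZMod 2)),
      (∀ a : Fin k → ZMod 2, (M₀ + ∑ i, a i • M i).det = f a) ∧
      (∀ i j : Fin k, i ≠ j →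
        ¬ ∃ c : Fin N, (∃ r, M i r c ≠ 0) ∧ (∃ r, M j r c ≠ 0)) ∧
      (∀ c : Fin N, ∃ r, M₀ r c ≠ 0) ∧
      (∀ (i : Fin k) (c : Fin N), (∃ r, M i r c ≠ 0) →
        (fun r => M i r c) ≠ (fun r => M₀ r c)) := by
  classical
  set ι := (Fin (k+2)) × (Fin k → ZMod 2) with hι
  set N := Fintype.card ι with hN
  set e : ι ≃ Fin N := Fintype.equivFin ι with he
  set M₀ : Matrix (Fin N) (Fin N) (ZMod 2) :=
    (blockDiagonal fun b => if f b = 0 then GG b else 1).submatrix e.symm e.symm with hM₀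
  set Mi : Fin k → Matrix (Fin N) (Fin N) (ZMod 2) :=
    (fun i => (blockDiagonal fun b => if f b = 0 then DD i else 0).submatrix e.symm e.symm)
    with hMi
  have hEq : ∀ a : Fin k → ZMod 2, M₀ + ∑ i, a i • Mi i =
      (blockDiagonal fun b => if f b = 0 then GG (fun t => a t + b t) else 1).submatrix
        e.symm e.symm := by
    intro a
    ext r c
    simp only [hM₀, hMi, Matrix.add_apply, Matrix.sum_apply, Matrix.smul_apply,
      Matrix.submatrix_apply, smul_eq_mul, Matrix.blockDiagonal_apply]
    by_cases hb : (e.symm r).2 = (e.symm c).2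
    · rw [if_pos hb, if_pos hb]
      by_cases hf : f (e.symm r).2 = 0
      · rw [if_pos hf, if_pos hf]
        rw [Finset.sum_congr rfl (fun i _ => by rw [if_pos hb, if_pos hf])]
        exact (GG_add a (e.symm r).2 (e.symm r).1 (e.symm c).1).symm
      · rw [if_neg hf, if_neg hf]
        rw [Finset.sum_congr rfl (fun i _ => by rw [if_pos hb, if_neg hf])]
        simp
    · rw [if_neg hb, if_neg hb]
      rw [Finset.sum_congr rfl (fun i _ => by rw [if_neg hb])]
      simp
  have key : ∀ (i : Fin k) (r c : Fin N), Mi i r c ≠ 0 →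
      ((e.symm c).1 : ℕ) = (i:ℕ) ∧ f (e.symm c).2 = 0 := by
    intro i r c h
    simp only [hMi, Matrix.submatrix_apply, Matrix.blockDiagonal_apply] at h
    by_cases hb : (e.symm r).2 = (e.symm c).2
    · rw [if_pos hb] at h
      by_cases hf : f (e.symm r).2 = 0
      · refine ⟨?_, by rw [← hb]; exact hf⟩
        rw [if_pos hf] at h
        by_contra hne
        apply h
        simp only [DD, Matrix.of_apply]
        rw [if_neg]
        rintro ⟨h1, -⟩; exact hne h1
      · rw [if_neg hf] at h
        simp at h
    · rw [if_neg hb] at h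
      exact absurd rfl h
  refine ⟨N, M₀, Mi, ?_, ?_, ?_, ?_⟩
  · intro a
    rw [hEq a, Matrix.det_submatrix_equiv_self, Matrix.det_blockDiagonal]
    have hfac : ∀ b : Fin k → ZMod 2, (if f b = 0 then GG (fun t => a t + b t) else 1).det
        = if f b = 0 then (if ∀ i, a i + b i = 0 then 0 else 1) else 1 := by
      intro b
      by_cases hf : f b = 0
      · rw [if_pos hf, if_pos hf, detGG]
      · rw [if_neg hf, if_neg hf, Matrix.det_one]
    rw [Finset.prod_congr rfl (fun b _ => hfac b)]
    by_cases hfa : f a = 0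
    · rw [hfa]
      apply Finset.prod_eq_zero (Finset.mem_univ a)
      rw [if_pos hfa, if_pos (fun i => zself (a i))]
    · rw [z1 _ hfa]
      apply Finset.prod_eq_one
      intro b _
      by_cases hfb : f b = 0
      · rw [if_pos hfb, if_neg]
        intro hall
        apply hfa
        have hab : a = b := funext fun i => zadd _ _ (hall i)
        rw [hab]; exact hfb
      · rw [if_neg hfb]
  · rintro i j hij ⟨c, ⟨r1, h1⟩, ⟨r2, h2⟩⟩
    obtain ⟨hi, -⟩ := key i r1 c h1
    obtain ⟨hj, -⟩ := key j r2 c h2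
    exact hij (Fin.ext (hi ▸ hj ▸ rfl))
  · intro c
    by_cases hf : f (e.symm c).2 = 0
    · obtain ⟨x, hx⟩ := GG_col hk (e.symm c).2 (e.symm c).1
      refine ⟨e (x, (e.symm c).2), ?_⟩
      rw [hM₀, Matrix.submatrix_apply, Equiv.symm_apply_apply, Matrix.blockDiagonal_apply,
        if_pos rfl, if_pos hf]
      exact hx
    · refine ⟨e ((e.symm c).1, (e.symm c).2), ?_⟩
      rw [hM₀, Matrix.submatrix_apply, Equiv.symm_apply_apply, Matrix.blockDiagonal_apply,
        if_pos rfl, if_neg hf]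
      simp [Matrix.one_apply]
  · rintro i c ⟨r, hr⟩ heq
    obtain ⟨hic, hfc⟩ := key i r c hr
    have hqk : (((e.symm c).1 : ℕ)) < k := by rw [hic]; exact i.isLt
    by_cases hb : ext0 (e.symm c).2 (((e.symm c).1 : ℕ)) = 0
    · have h1 := congrFun heq (e (⟨k+1, by omega⟩, (e.symm c).2))
      simp only [hMi, hM₀, Matrix.submatrix_apply, Equiv.symm_apply_apply,
        Matrix.blockDiagonal_apply, if_true] at h1
      rw [if_pos hfc, if_pos hfc, GG_rowlast _ _ _ rfl, hb] at h1
      have hDD : DD i (⟨k+1, by omega⟩ : Fin (k+2)) (e.symm c).1 = 1 := by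
        simp only [DD, Matrix.of_apply]
        rw [if_pos]
        exact ⟨hic, Or.inr (by trivial)⟩
      rw [hDD] at h1
      exact one_ne_zero h1
    · have h1 := congrFun heq (e (⟨((e.symm c).1 : ℕ)+1, by omega⟩, (e.symm c).2))
      simp only [hMi, hM₀, Matrix.submatrix_apply, Equiv.symm_apply_apply,
        Matrix.blockDiagonal_apply, if_true] at h1
      rw [if_pos hfc, if_pos hfc,
        GG_rowmid _ _ _ (Nat.succ_ne_zero _) (by simp only [Fin.val_mk]; omega)] at h1
      have hv : ((⟨((e.symm c).1 : ℕ)+1, by omega⟩ : Fin (k+2)) : ℕ)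
          = ((e.symm c).1 : ℕ)+1 := rfl
      rw [hv, if_pos rfl, if_neg (by omega), add_zero, z1 _ hb] at h1
      have hDD : DD i (⟨((e.symm c).1 : ℕ)+1, by omega⟩ : Fin (k+2)) (e.symm c).1 = 1 := by
        simp only [DD, Matrix.of_apply]
        rw [if_pos]
        exact ⟨hic, Or.inl (by omega)⟩
      rw [hDD] at h1
      exact absurd h1 (by decide)

end Stmt15Aux

theorem stmt_15 (k : ℕ) (f : (Fin k → ZMod 2) → ZMod 2) :
    ∃ (N : ℕ) (M₀ : Matrix (Fin N) (Fin N) (ZMod 2))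
      (M : Fin k → Matrix (Fin N) (Fin N) (ZMod 2)),
      (∀ a : Fin k → ZMod 2, (M₀ + ∑ i, a i • M i).det = f a) ∧
      (∀ i j : Fin k, i ≠ j →
        ¬ ∃ c : Fin N, (∃ r, M i r c ≠ 0) ∧ (∃ r, M j r c ≠ 0)) ∧
      (∀ c : Fin N, ∃ r, M₀ r c ≠ 0) ∧
      (∀ (i : Fin k) (c : Fin N), (∃ r, M i r c ≠ 0) →
        (fun r => M i r c) ≠ (fun r => M₀ r c)) := by
  rcases Nat.eq_zero_or_pos k with hk | hk
  · subst hk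
    refine ⟨2, if f (fun i => i.elim0) = 0 then Matrix.of ![![1,1],![1,1]] else 1,
      fun i => i.elim0, ?_, ?_, ?_, ?_⟩
    · intro a
      have hs : (∑ i : Fin 0, a i • (fun (i : Fin 0) =>
          (i.elim0 : Matrix (Fin 2) (Fin 2) (ZMod 2))) i) = 0 := by simp
      rw [hs, add_zero]
      have ha : a = (fun i : Fin 0 => i.elim0) := funext fun i => i.elim0
      by_cases hf : f (fun i => i.elim0) = 0
      · rw [if_pos hf, ha, hf, Matrix.det_fin_two]
        simp
      · rw [if_neg hf, Matrix.det_one, ha, Stmt15Aux.z1 _ hf]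
    · intro i; exact i.elim0
    · intro c
      by_cases hf : f (fun i => i.elim0) = 0
      · rw [if_pos hf]
        refine ⟨0, ?_⟩
        fin_cases c <;> decide
      · rw [if_neg hf]
        exact ⟨c, by simp [Matrix.one_apply]⟩
    · intro i; exact i.elim0
  · exact Stmt15Aux.main_pos k hk f
end
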